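/- arXiv:2501.10916 — 2 statements merged into one kernel-verified Lean document; each statement's English description precedes it below -/
import Mathlib

section
/- The generating function for the total number of hooks of length 1 in all ℓ-distinct partitions of n satisfies ∑_{n≥0} d_{ℓ,1}(n) q^n = ((q^ℓ;q^ℓ)_∞/(q;q)_∞) · ∑_{m≥0} q^{m+1}(1-q^{(ℓ-1)(m+1)})/(1-q^{ℓ(m+1)}) as formal power series. -/
open PowerSeries

/-- The `i`-th largest part (0-indexed) of a partition, or `0` if `i` is too large. -/
def partAt {n : ℕ} (p : Nat.Partition n) (i : ℕ) : ℕ :=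
  ((p.parts.sort (· ≤ ·)).reverse).getD i 0

/-- The number of parts of `p` exceeding `j`, i.e. the `j`-th column length (0-indexed). -/
def colAt {n : ℕ} (p : Nat.Partition n) (j : ℕ) : ℕ :=
  (p.parts.filter (fun a => j < a)).card

/-- The number of cells in the Young diagram of `p` whose hook length equals `t`.
The cell in row `i`, column `j` (0-indexed) has hook length
`(λᵢ - 1 - j) + (λ'ⱼ - 1 - i) + 1`. -/
def hookCount {n : ℕ} (p : Nat.Partition n) (t : ℕ) : ℕ :=
  ((Finset.range n ×ˢ Finset.range n).filter
    (fun ij => ij.2 < partAt p ij.1 ∧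
      (partAt p ij.1 - ij.2) + (colAt p ij.2 - ij.1) - 1 = t)).card

/-- `dCount ℓ t n` is the total number of hooks of length `t` over all `ℓ`-distinct
partitions of `n` (partitions in which every part appears fewer than `ℓ` times). -/
def dCount (ℓ t n : ℕ) : ℕ :=
  ∑ p ∈ Finset.univ.filter (fun p : Nat.Partition n => ∀ a ∈ p.parts, p.parts.count a < ℓ),
    hookCount p t

noncomputable instance : TopologicalSpace (PowerSeries ℚ) :=
  inferInstanceAs (TopologicalSpace ((Unit →₀ ℕ) → ℚ))

/-!
A hook of length 1 is a corner of the Young diagram, and the corners correspond to the distinct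
part sizes, so `d_{ℓ,1}(n) = ∑_{m ≥ 1} #{ℓ-distinct partitions of n having m as a part}`.
If `P` is the generating function of ℓ-distinct partitions and `Q_m` that of those avoiding the
part `m`, the product formula gives `P = Q_m (1 + X^m + ⋯ + X^{(ℓ-1)m})`, hence the partitions
containing `m` are counted by `P - Q_m = P (X^m - X^{ℓm}) / (1 - X^{ℓm})`. Summing over `m` and
using `P (X;X)_∞ = (X^ℓ;X^ℓ)_∞` gives the formula.
-/

open Finset PowerSeries PowerSeries.WithPiTopology Nat.Partition

theorem List.lt_countP_iff_lt_getD {L : List ℕ} (hL : L.Pairwise (· ≥ ·)) (i j : ℕ) :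
    i < L.countP (j < ·) ↔ j < L.getD i 0 := by
  induction L generalizing i with
  | nil => simp
  | cons a L ih =>
    rw [List.pairwise_cons] at hL
    by_cases hja : j < a
    · cases i with
      | zero => simp [hja]
      | succ i => simp [hja, ih hL.2]
    · have hL0 : L.countP (j < ·) = 0 :=
        List.countP_eq_zero.mpr fun b hb => by
          have := hL.1 b hb
          simp only [decide_eq_true_eq, not_lt]
          omega
      cases i with
      | zero => simp [hja, hL0]
      | succ i => simp only [List.countP_cons, List.getD_cons_succ, ← ih hL.2, hL0]; simp [hja]

theorem Nat.Partition.card_parts_le {n : ℕ} (p : n.Partition) : Multiset.card p.parts ≤ n := by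
  simpa [p.parts_sum] using Multiset.card_nsmul_le_sum fun x hx => p.parts_pos hx

section YoungDiagram

variable {n : ℕ} (p : n.Partition)

theorem lt_partAt_iff_lt_colAt (i j : ℕ) : j < partAt p i ↔ i < colAt p j := by
  have hsorted : ((p.parts.sort (· ≤ ·)).reverse).Pairwise (· ≥ ·) :=
    List.pairwise_reverse.mpr (Multiset.pairwise_sort _ _)
  have hcol : colAt p j = ((p.parts.sort (· ≤ ·)).reverse).countP (j < ·) := by
    rw [List.countP_reverse, ← Multiset.coe_countP, Multiset.sort_eq,
      Multiset.countP_eq_card_filter]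
    rfl
  rw [hcol]
  exact (List.lt_countP_iff_lt_getD hsorted i j).symm

theorem partAt_mem_parts {i : ℕ} (hi : 0 < partAt p i) : partAt p i ∈ p.parts := by
  rw [partAt, List.getD_eq_getElem?_getD] at *
  cases h : ((p.parts.sort (· ≤ ·)).reverse)[i]? with
  | none => simp [h] at hi
  | some a => simpa using List.mem_of_getElem? h

theorem colAt_le_card_parts (j : ℕ) : colAt p j ≤ Multiset.card p.parts :=
  Multiset.card_le_card (Multiset.filter_le _ _)

theorem colAt_lt_colAt_pred {v : ℕ} (hv : v ∈ p.parts) : colAt p v < colAt p (v - 1) := by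
  have hv0 := p.parts_pos hv
  refine Multiset.card_lt_card (lt_of_le_of_ne
    (Multiset.monotone_filter_right _ fun a (h : v < a) => show v - 1 < a by omega) fun h => ?_)
  have := congrArg (v ∈ ·) h
  simp [hv, hv0] at this

theorem hookLength_eq_one_iff (i j : ℕ) :
    (j < partAt p i ∧ (partAt p i - j) + (colAt p j - i) - 1 = 1) ↔
      partAt p i = j + 1 ∧ colAt p j = i + 1 := by
  have := lt_partAt_iff_lt_colAt p i j
  omega

/-- The corner `(i, j)` is sent to the part `j + 1`; the corner of the part `v` sits at the bottom
of column `v - 1`. -/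
theorem hookCount_one : hookCount p 1 = #p.parts.toFinset := by
  unfold hookCount
  simp only [hookLength_eq_one_iff]
  refine card_bij (fun ij _ => ij.2 + 1) ?_ ?_ ?_
  · rintro ⟨i, j⟩ hij
    simp only [mem_filter] at hij
    rw [Multiset.mem_toFinset, ← hij.2.1]
    exact partAt_mem_parts p (by omega)
  · rintro ⟨i, j⟩ hij ⟨i', j'⟩ hij' h
    simp only [mem_filter] at hij hij'
    simp only [add_left_inj] at h
    subst h
    simp only [Prod.mk.injEq, and_true]
    omega
  · intro v hv
    rw [Multiset.mem_toFinset] at hv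
    have hvn := le_of_mem_parts hv
    have hcol := colAt_lt_colAt_pred p hv
    have hcn := (colAt_le_card_parts p (v - 1)).trans p.card_parts_le
    set c := colAt p (v - 1)
    have hlow := (lt_partAt_iff_lt_colAt p (c - 1) (v - 1)).mpr (by omega)
    have hup := (lt_partAt_iff_lt_colAt p (c - 1) v).not.mpr (by omega)
    refine ⟨(c - 1, v - 1), ?_, by dsimp only; omega⟩
    simp only [mem_filter, mem_product, mem_range]
    omega

theorem Nat.Partition.card_toFinset_parts :
    #p.parts.toFinset = #{m ∈ range n | m + 1 ∈ p.parts} := by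
  refine card_nbij' (· - 1) (· + 1) (fun v hv => ?_) (fun m hm => ?_) (fun v hv => ?_)
    (fun m _ => by simp)
  · simp only [coe_filter, mem_coe, Multiset.mem_toFinset] at hv ⊢
    have := p.parts_pos hv
    have := le_of_mem_parts hv
    exact ⟨by rw [mem_range]; omega, by rwa [Nat.sub_add_cancel (by omega)]⟩
  · simp only [coe_filter, mem_coe, Multiset.mem_toFinset] at hm ⊢
    exact hm.2
  · simp only [mem_coe, Multiset.mem_toFinset] at hv
    have := p.parts_pos hv
    simp only [Nat.sub_add_cancel this]

end YoungDiagram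

theorem dCount_one_eq_sum (ℓ n : ℕ) :
    dCount ℓ 1 n = ∑ m ∈ range n, #{p ∈ countRestricted n ℓ | m + 1 ∈ p.parts} := by
  change ∑ p ∈ countRestricted n ℓ, hookCount p 1 = _
  simp_rw [hookCount_one, card_toFinset_parts, card_filter]
  exact sum_comm

theorem PowerSeries.geom_sum_X_pow_mul_one_sub (R : Type*) [CommRing R] (ℓ m : ℕ) :
    (∑ j ∈ range ℓ, (X : R⟦X⟧) ^ (m * j)) * (1 - X ^ m) = 1 - X ^ (ℓ * m) := by
  simp_rw [pow_mul]
  rw [geom_sum_mul_neg, ← pow_mul, ← pow_mul, mul_comm]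

theorem PowerSeries.constantCoeff_eq_one_of_hasProd {R : Type*} [CommSemiring R]
    [TopologicalSpace R] [T2Space R] {ι : Type*} {f : ι → R⟦X⟧} {a : R⟦X⟧} (hf : HasProd f a)
    (h : ∀ i, constantCoeff (f i) = 1) : constantCoeff a = 1 :=
  (hf.map constantCoeff (continuous_constantCoeff R)).unique (by simp [Function.comp_def, h])

namespace Nat.Partition

theorem hasProd_powerSeriesMk_card_countRestricted_notMem (R : Type*) [CommSemiring R]
    [TopologicalSpace R] [T2Space R] {ℓ : ℕ} (hℓ : 0 < ℓ) (m : ℕ) :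
    HasProd (fun i ↦ if i + 1 = m then 1 else ∑ j ∈ range ℓ, X ^ ((i + 1) * j))
      (PowerSeries.mk fun n ↦ (#{p ∈ countRestricted n ℓ | m ∉ p.parts} : R)) := by
  convert hasProd_genFun (fun i c ↦ if i ≠ m ∧ c < ℓ then (1 : R) else 0) using 1
  · ext1 i
    split_ifs with hi
    · simp [hi]
    rw [sum_range_eq_add_Ico _ hℓ, sum_Ico_eq_sum_range,
      tsum_eq_sum (s := range (ℓ - 1)) fun b hb => by
        rw [mem_range, not_lt] at hb
        simp [hi, show ¬b + 1 < ℓ by omega]]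
    refine congrArg₂ _ (by simp) (sum_congr rfl fun b hb => ?_)
    rw [mem_range] at hb
    rw [if_pos ⟨hi, by omega⟩, one_smul, add_comm 1 b]
  · simp_rw [genFun, countRestricted, filter_filter, card_filter, Finsupp.prod, prod_boole]
    simp only [Finsupp.mem_support_iff, Multiset.toFinsupp_apply, ne_eq, Multiset.count_eq_zero,
      not_not, sum_boole, Nat.cast_id]
    congr! 4 with n
    refine filter_congr fun p _ => ?_
    simp only [forall_and, and_comm]
    grind

theorem powerSeriesMk_card_countRestricted_eq_mul (R : Type*) [CommSemiring R] {ℓ : ℕ}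
    (hℓ : 0 < ℓ) {m : ℕ} (hm : 0 < m) :
    PowerSeries.mk (fun n ↦ (#(countRestricted n ℓ) : R)) =
      PowerSeries.mk (fun n ↦ (#{p ∈ countRestricted n ℓ | m ∉ p.parts} : R)) *
        ∑ j ∈ range ℓ, X ^ (m * j) := by
  -- The identity is algebraic; the discrete topology only serves to compare two product formulas.
  let _ : TopologicalSpace R := ⊥
  have _ : DiscreteTopology R := ⟨rfl⟩
  refine (hasProd_powerSeriesMk_card_countRestricted R hℓ).unique ?_
  convert (hasProd_powerSeriesMk_card_countRestricted_notMem R hℓ m).mul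
    (hasProd_ite_eq (m - 1) (∑ j ∈ range ℓ, X ^ (m * j))) using 1
  ext1 i
  by_cases hi : i + 1 = m
  · subst hi
    simp
  · simp [hi, show i ≠ m - 1 by omega]

theorem powerSeriesMk_card_countRestricted_mem_mul (R : Type*) [CommRing R] {ℓ : ℕ} (hℓ : 0 < ℓ)
    {m : ℕ} (hm : 0 < m) :
    PowerSeries.mk (fun n ↦ (#{p ∈ countRestricted n ℓ | m ∈ p.parts} : R)) * (1 - X ^ (ℓ * m)) =
      PowerSeries.mk (fun n ↦ (#(countRestricted n ℓ) : R)) * (X ^ m - X ^ (ℓ * m)) := by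
  have hsplit : PowerSeries.mk (fun n ↦ (#{p ∈ countRestricted n ℓ | m ∈ p.parts} : R)) =
      PowerSeries.mk (fun n ↦ (#(countRestricted n ℓ) : R)) -
        PowerSeries.mk (fun n ↦ (#{p ∈ countRestricted n ℓ | m ∉ p.parts} : R)) := by
    ext n
    simp [← card_filter_add_card_filter_not (s := countRestricted n ℓ) (m ∈ ·.parts)]
  rw [hsplit]
  linear_combination (1 - X ^ m) * powerSeriesMk_card_countRestricted_eq_mul R hℓ hm +
    PowerSeries.mk (fun n ↦ (#{p ∈ countRestricted n ℓ | m ∉ p.parts} : R)) *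
      geom_sum_X_pow_mul_one_sub R ℓ m

theorem powerSeriesMk_card_countRestricted_mem (K : Type*) [Field K] {ℓ : ℕ} (hℓ : 0 < ℓ)
    {m : ℕ} (hm : 0 < m) :
    PowerSeries.mk (fun n ↦ (#{p ∈ countRestricted n ℓ | m ∈ p.parts} : K)) =
      PowerSeries.mk (fun n ↦ (#(countRestricted n ℓ) : K)) *
        (X ^ m * (1 - X ^ ((ℓ - 1) * m)) * (1 - X ^ (ℓ * m))⁻¹) := by
  have hX : (X : K⟦X⟧) ^ m * (1 - X ^ ((ℓ - 1) * m)) = X ^ m - X ^ (ℓ * m) := by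
    rw [mul_sub, mul_one, ← pow_add]
    congr 2
    obtain ⟨k, rfl⟩ := Nat.exists_eq_add_of_lt hℓ
    simp only [zero_add, add_tsub_cancel_right]
    ring
  rw [← mul_assoc, eq_mul_inv_iff_mul_eq (by simp [hℓ.ne', hm.ne']), hX,
    powerSeriesMk_card_countRestricted_mem_mul K hℓ hm]

end Nat.Partition

theorem hasSum_powerSeriesMk_dCount_one (R : Type*) [CommSemiring R] [TopologicalSpace R]
    (ℓ : ℕ) :
    HasSum (fun m ↦ PowerSeries.mk fun n ↦ (#{p ∈ countRestricted n ℓ | m + 1 ∈ p.parts} : R))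
      (PowerSeries.mk fun n ↦ (dCount ℓ 1 n : R)) := by
  rw [hasSum_iff_hasSum_coeff]
  intro d
  simp only [coeff_mk, dCount_one_eq_sum, Nat.cast_sum]
  refine hasSum_sum_of_ne_finset_zero fun m hm => ?_
  rw [mem_range, not_lt] at hm
  have : {p ∈ countRestricted d ℓ | m + 1 ∈ p.parts} = ∅ :=
    filter_eq_empty_iff.mpr fun p _ h => by have := le_of_mem_parts h; omega
  simp [this]

theorem powerSeriesMk_dCount_one (K : Type*) [Field K] [TopologicalSpace K]
    [IsTopologicalSemiring K] [T2Space K] {ℓ : ℕ} (hℓ : 0 < ℓ) :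
    (PowerSeries.mk fun n => (dCount ℓ 1 n : K)) =
      (∏' j : ℕ, (1 - (X : K⟦X⟧) ^ (ℓ * (j + 1)))) *
        (∏' j : ℕ, (1 - (X : K⟦X⟧) ^ (j + 1)))⁻¹ *
        ∑' m : ℕ, (X : K⟦X⟧) ^ (m + 1) * (1 - (X : K⟦X⟧) ^ ((ℓ - 1) * (m + 1))) *
          (1 - (X : K⟦X⟧) ^ (ℓ * (m + 1)))⁻¹ := by
  set P := PowerSeries.mk fun n ↦ (#(countRestricted n ℓ) : K)
  have hP0 : constantCoeff P ≠ 0 := by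
    simp [P, ← coeff_zero_eq_constantCoeff_apply, countRestricted]
  have hB := (multipliable_one_sub_X_pow K).hasProd
  have hB0 : constantCoeff (∏' j : ℕ, (1 - (X : K⟦X⟧) ^ (j + 1))) ≠ 0 := by
    simp [constantCoeff_eq_one_of_hasProd hB fun i => by simp]
  have hA := (hasProd_powerSeriesMk_card_countRestricted K hℓ).mul hB
  simp_rw [geom_sum_X_pow_mul_one_sub] at hA
  have hT : HasSum (fun m : ℕ ↦ (X : K⟦X⟧) ^ (m + 1) * (1 - X ^ ((ℓ - 1) * (m + 1))) *
      (1 - X ^ (ℓ * (m + 1)))⁻¹) (P⁻¹ * PowerSeries.mk fun n => (dCount ℓ 1 n : K)) := by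
    refine ((hasSum_powerSeriesMk_dCount_one K ℓ).mul_left P⁻¹).congr_fun fun m ↦ ?_
    rw [powerSeriesMk_card_countRestricted_mem K hℓ (Nat.add_one_pos m), ← mul_assoc,
      PowerSeries.inv_mul_cancel _ hP0, one_mul]
  rw [hA.tprod_eq, mul_assoc P, PowerSeries.mul_inv_cancel _ hB0, mul_one, hT.tsum_eq,
    ← mul_assoc, PowerSeries.mul_inv_cancel _ hP0, one_mul]

theorem dCount_one_generating_function (ℓ : ℕ) (hℓ : 2 ≤ ℓ) :
    (PowerSeries.mk fun n => (dCount ℓ 1 n : ℚ)) =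
      (∏' j : ℕ, (1 - (X : ℚ⟦X⟧) ^ (ℓ * (j + 1)))) *
        (∏' j : ℕ, (1 - (X : ℚ⟦X⟧) ^ (j + 1)))⁻¹ *
        ∑' m : ℕ, (X : ℚ⟦X⟧) ^ (m + 1) * (1 - (X : ℚ⟦X⟧) ^ ((ℓ - 1) * (m + 1))) *
          (1 - (X : ℚ⟦X⟧) ^ (ℓ * (m + 1)))⁻¹ :=
  powerSeriesMk_dCount_one ℚ (by omega)
end

section
/- For all x in (0,1), ψ'(x+1) + 2(ψ(2x) - ψ(x)) + 2x(2ψ'(2x) - ψ'(x)) ≥ π²/6 - 1 > 0, where ψ is the digamma function. -/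
/-!
Both `ψ` and `digammaSeries x = -γ + ∑ₙ (1/(n+1) - 1/(n+x))` are monotone on `(0, ∞)`
(`ψ` because `log Γ` is convex) and satisfy `f (x + 1) = f x + 1/x`. Their difference is
therefore `1`-periodic, with oscillation on `[a, a + 1]` at most `1/(a + n)` for every `n`;
so it is constant, and `ψ(1) = -γ` makes it zero. Differentiating termwise,
`ψ'(x) = ∑ₙ 1/(n+x)²`, and the left-hand side becomes the sum over `n` of
`1/(n+x+1)² + 2xn(2n+3x)/((n+x)²(n+2x)²) ≥ 1/(n+2)²`, while `∑ₙ 1/(n+2)² = π²/6 - 1`.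
-/

/-- The digamma function `ψ(x) = Γ'(x)/Γ(x)`. -/
noncomputable def digamma (x : ℝ) : ℝ := deriv Real.Gamma x / Real.Gamma x

/-- `g₂(x) = 3/2 - γ - ψ(x+1) - 2x(ψ(2x) - ψ(x))`. -/
noncomputable def g2 (x : ℝ) : ℝ :=
  3 / 2 - Real.eulerMascheroniConstant - digamma (x + 1)
    - 2 * x * (digamma (2 * x) - digamma x)

/-- `g₃(x) = 2 - γ - ψ(x+1) + (x/2)(5-3x)ψ(x) - x(1-6x)ψ(2x) - (3x/2)(1+3x)ψ(3x)`. -/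
noncomputable def g3 (x : ℝ) : ℝ :=
  2 - Real.eulerMascheroniConstant - digamma (x + 1)
    + x / 2 * (5 - 3 * x) * digamma x
    - x * (1 - 6 * x) * digamma (2 * x)
    - 3 * x / 2 * (1 + 3 * x) * digamma (3 * x)

/-- `β₁(ℓ) = (1/ℓ)(-γ - ψ(1/ℓ))`. -/
noncomputable def beta1 (l : ℝ) : ℝ :=
  1 / l * (-Real.eulerMascheroniConstant - digamma (1 / l))

/-- `β₂(ℓ) = (1/ℓ)[1 - γ - (1 - 2/ℓ)ψ(1/ℓ) - (2/ℓ)ψ(2/ℓ)]`. -/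
noncomputable def beta2 (l : ℝ) : ℝ :=
  1 / l * (1 - Real.eulerMascheroniConstant - (1 - 2 / l) * digamma (1 / l)
    - 2 / l * digamma (2 / l))

/-- `β₃(ℓ) = (1/ℓ)[3/2 - γ - (1 - 3/(2ℓ))(1 - 1/ℓ)ψ(1/ℓ) - (1/ℓ)(1 - 6/ℓ)ψ(2/ℓ)
  - (3/(2ℓ))(1 + 3/ℓ)ψ(3/ℓ)]`. -/
noncomputable def beta3 (l : ℝ) : ℝ :=
  1 / l * (3 / 2 - Real.eulerMascheroniConstant
    - (1 - 3 / (2 * l)) * (1 - 1 / l) * digamma (1 / l)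
    - 1 / l * (1 - 6 / l) * digamma (2 / l)
    - 3 / (2 * l) * (1 + 3 / l) * digamma (3 / l))

open Real Filter Topology Set

section MonotoneRecurrence

variable {f g r : ℝ → ℝ}

theorem sub_add_nat_eq_sub (hf : ∀ x > 0, f (x + 1) = f x + r x)
    (hg : ∀ x > 0, g (x + 1) = g x + r x) {x : ℝ} (hx : 0 < x) (n : ℕ) :
    f (x + n) - g (x + n) = f x - g x := by
  induction n with
  | zero => simp
  | succ n ih =>
    have hxn : 0 < x + n := by positivity
    rw [Nat.cast_succ, ← add_assoc, hf _ hxn, hg _ hxn]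
    linarith

theorem abs_sub_sub_sub_le_of_monotoneOn (hfm : MonotoneOn f (Ioi 0))
    (hgm : MonotoneOn g (Ioi 0)) (hf : ∀ x > 0, f (x + 1) = f x + r x)
    (hg : ∀ x > 0, g (x + 1) = g x + r x) {a b : ℝ} (ha : 0 < a) (hab : a ≤ b)
    (hb : b ≤ a + 1) : |(f b - g b) - (f a - g a)| ≤ r a := by
  have hb0 : (0 : ℝ) < b := ha.trans_le hab
  have ha1 : (0 : ℝ) < a + 1 := by linarith
  have hfab := hfm ha hb0 hab
  have hfb1 := hfm hb0 ha1 hb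
  have hgab := hgm ha hb0 hab
  have hgb1 := hgm hb0 ha1 hb
  rw [hf a ha] at hfb1
  rw [hg a ha] at hgb1
  rw [abs_le]
  constructor <;> linarith

theorem sub_eq_sub_of_monotoneOn (hfm : MonotoneOn f (Ioi 0)) (hgm : MonotoneOn g (Ioi 0))
    (hf : ∀ x > 0, f (x + 1) = f x + r x) (hg : ∀ x > 0, g (x + 1) = g x + r x)
    (hr : Tendsto r atTop (𝓝 0)) {a b : ℝ} (ha : 0 < a) (hb : 0 < b) :
    f a - g a = f b - g b := by
  wlog hab : a ≤ b generalizing a b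
  · exact (this hb ha (le_of_not_ge hab)).symm
  set m := ⌊b - a⌋₊
  set c := b - m
  have hac : a ≤ c := by linarith [Nat.floor_le (sub_nonneg.mpr hab)]
  have hca : c ≤ a + 1 := by linarith [Nat.lt_floor_add_one (b - a)]
  have hbc : f b - g b = f c - g c := by
    simpa [c] using sub_add_nat_eq_sub hf hg (ha.trans_le hac) m
  have hbound (n : ℕ) : |(f c - g c) - (f a - g a)| ≤ r (a + n) := by
    have h := abs_sub_sub_sub_le_of_monotoneOn hfm hgm hf hg (a := a + n) (b := c + n)
      (by positivity) (by linarith) (by linarith)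
    rwa [sub_add_nat_eq_sub hf hg (ha.trans_le hac), sub_add_nat_eq_sub hf hg ha] at h
  have hlim : Tendsto (fun n : ℕ => r (a + n)) atTop (𝓝 0) :=
    hr.comp (tendsto_atTop_add_const_left _ a tendsto_natCast_atTop_atTop)
  have h0 := abs_nonpos_iff.mp (ge_of_tendsto' hlim hbound)
  rw [hbc]
  linarith

end MonotoneRecurrence

theorem hasSum_sub_add_one_of_tendsto {G : Type*} [AddCommGroup G] [TopologicalSpace G]
    [IsTopologicalAddGroup G] [T2Space G] {u : ℕ → G} {l : G}
    (hs : Summable fun n => u n - u (n + 1)) (hu : Tendsto u atTop (𝓝 l)) :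
    HasSum (fun n => u n - u (n + 1)) (u 0 - l) := by
  rw [hs.hasSum_iff_tendsto_nat]
  simp_rw [Finset.sum_range_sub']
  exact tendsto_const_nhds.sub hu

theorem hasDerivAt_log_Gamma {x : ℝ} (hx : 0 < x) :
    HasDerivAt (log ∘ Gamma) (digamma x) x := by
  have hΓ : DifferentiableAt ℝ Gamma x :=
    differentiableAt_Gamma fun m => by linarith [(m.cast_nonneg : (0 : ℝ) ≤ m)]
  simpa [digamma, div_eq_inv_mul] using
    (hasDerivAt_log (Gamma_pos_of_pos hx).ne').comp x hΓ.hasDerivAt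

theorem monotoneOn_digamma : MonotoneOn digamma (Ioi 0) := by
  have h := convexOn_log_Gamma.monotoneOn_deriv fun x hx =>
    (hasDerivAt_log_Gamma hx).differentiableAt
  exact h.congr fun x hx => (hasDerivAt_log_Gamma hx).deriv

theorem digamma_add_one {x : ℝ} (hx : 0 < x) : digamma (x + 1) = digamma x + x⁻¹ := by
  have hlhs : HasDerivAt (fun y => log (Gamma (y + 1))) (digamma (x + 1)) x :=
    (hasDerivAt_log_Gamma (by linarith)).comp_add_const x 1
  have hrhs : HasDerivAt (fun y => log (Gamma (y + 1))) (x⁻¹ + digamma x) x := by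
    refine ((hasDerivAt_log hx.ne').add (hasDerivAt_log_Gamma hx)).congr_of_eventuallyEq ?_
    filter_upwards [Ioi_mem_nhds hx] with y hy
    simp [Gamma_add_one (ne_of_gt hy), log_mul (ne_of_gt hy) (Gamma_pos_of_pos hy).ne']
  rw [hlhs.unique hrhs, add_comm]

theorem digamma_one : digamma 1 = -eulerMascheroniConstant := by
  simp [digamma, eulerMascheroniConstant_eq_neg_deriv]

theorem summable_one_div_nat_add_sq (a : ℝ) : Summable fun n : ℕ => 1 / ((n : ℝ) + a) ^ 2 := by
  simpa only [rpow_two, sq_abs] using (summable_one_div_nat_add_rpow a 2).mpr one_lt_two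

noncomputable def digammaSeries (x : ℝ) : ℝ :=
  -eulerMascheroniConstant + ∑' n : ℕ, (1 / ((n : ℝ) + 1) - 1 / ((n : ℝ) + x))

theorem summable_digammaSeries {x : ℝ} (hx : 0 < x) :
    Summable fun n : ℕ => 1 / ((n : ℝ) + 1) - 1 / ((n : ℝ) + x) := by
  refine Summable.of_norm_bounded
    (((summable_one_div_nat_add_sq 1).add (summable_one_div_nat_add_sq x)).mul_left |x - 1|)
    fun n => ?_
  set p := 1 / ((n : ℝ) + 1)
  set q := 1 / ((n : ℝ) + x)
  have hp : 0 < p := by positivity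
  have hq : 0 < q := by positivity
  have hpq : p - q = (x - 1) * (p * q) := by
    simp only [p, q]
    field_simp
    ring
  have hsq : 1 / ((n : ℝ) + 1) ^ 2 + 1 / ((n : ℝ) + x) ^ 2 = p ^ 2 + q ^ 2 := by
    simp only [p, q, one_div_pow]
  rw [norm_eq_abs, hpq, abs_mul, abs_of_pos (mul_pos hp hq), hsq]
  gcongr
  nlinarith [sq_nonneg (p - q)]

theorem monotoneOn_digammaSeries : MonotoneOn digammaSeries (Ioi 0) := by
  intro a ha b hb hab
  refine add_le_add le_rfl ((summable_digammaSeries ha).tsum_le_tsum (fun n => ?_)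
    (summable_digammaSeries hb))
  have : 0 < (n : ℝ) + a := add_pos_of_nonneg_of_pos n.cast_nonneg ha
  gcongr

theorem digammaSeries_add_one {x : ℝ} (hx : 0 < x) :
    digammaSeries (x + 1) = digammaSeries x + x⁻¹ := by
  have hs₁ := summable_digammaSeries (by linarith : 0 < x + 1)
  have hs₀ := summable_digammaSeries hx
  have hterm (n : ℕ) : (1 / ((n : ℝ) + 1) - 1 / ((n : ℝ) + (x + 1)))
      - (1 / ((n : ℝ) + 1) - 1 / ((n : ℝ) + x))
      = 1 / ((n : ℝ) + x) - 1 / (((n + 1 : ℕ) : ℝ) + x) := by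
    push_cast
    ring
  have hlim : Tendsto (fun n : ℕ => 1 / ((n : ℝ) + x)) atTop (𝓝 0) := by
    simpa only [one_div, Function.comp_def] using
      tendsto_inv_atTop_zero.comp (tendsto_atTop_add_const_right _ x tendsto_natCast_atTop_atTop)
  have h := hasSum_sub_add_one_of_tendsto (by simpa only [hterm] using hs₁.sub hs₀) hlim
  simp_rw [← hterm] at h
  have := h.unique (hs₁.hasSum.sub hs₀.hasSum)
  simp only [digammaSeries, CharP.cast_eq_zero, zero_add, sub_zero, one_div] at this ⊢
  linarith

theorem digammaSeries_one : digammaSeries 1 = -eulerMascheroniConstant := by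
  simp [digammaSeries]

theorem digamma_eq_digammaSeries {x : ℝ} (hx : 0 < x) : digamma x = digammaSeries x := by
  have h := sub_eq_sub_of_monotoneOn monotoneOn_digamma monotoneOn_digammaSeries
    (fun _ => digamma_add_one) (fun _ => digammaSeries_add_one) tendsto_inv_atTop_zero hx one_pos
  rw [digamma_one, digammaSeries_one, sub_self] at h
  linarith

theorem hasDerivAt_digammaSeries {x : ℝ} (hx : 0 < x) :
    HasDerivAt digammaSeries (∑' n : ℕ, 1 / ((n : ℝ) + x) ^ 2) x := by
  have hmem : x ∈ Ioi (x / 2) := by simp only [mem_Ioi]; linarith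
  have hterm (n : ℕ) {y : ℝ} (hy : 0 < y) :
      HasDerivAt (fun z => 1 / ((n : ℝ) + 1) - 1 / ((n : ℝ) + z)) (1 / ((n : ℝ) + y) ^ 2) y := by
    have hny : (n : ℝ) + y ≠ 0 := by positivity
    have h := (((hasDerivAt_id y).const_add (n : ℝ)).inv hny).const_sub (1 / ((n : ℝ) + 1))
    simpa only [id, neg_div, neg_neg, one_div, Pi.inv_apply] using h
  have hbound (n : ℕ) {y : ℝ} (hy : x / 2 < y) :
      ‖1 / ((n : ℝ) + y) ^ 2‖ ≤ 1 / ((n : ℝ) + x / 2) ^ 2 := by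
    have : 0 < (n : ℝ) + x / 2 := by positivity
    rw [norm_of_nonneg (by positivity)]
    gcongr
  have hS := hasDerivAt_tsum_of_isPreconnected
    (g := fun (n : ℕ) (z : ℝ) => 1 / ((n : ℝ) + 1) - 1 / ((n : ℝ) + z))
    (g' := fun (n : ℕ) (z : ℝ) => 1 / ((n : ℝ) + z) ^ 2)
    (summable_one_div_nat_add_sq (x / 2)) isOpen_Ioi isPreconnected_Ioi
    (fun n y hy => hterm n (by linarith [mem_Ioi.mp hy])) (fun n y hy => hbound n hy) hmem
    (summable_digammaSeries hx) hmem
  exact hS.const_add _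

theorem hasDerivAt_digamma {x : ℝ} (hx : 0 < x) :
    HasDerivAt digamma (∑' n : ℕ, 1 / ((n : ℝ) + x) ^ 2) x :=
  (hasDerivAt_digammaSeries hx).congr_of_eventuallyEq <| by
    filter_upwards [Ioi_mem_nhds hx] with y hy
    exact digamma_eq_digammaSeries hy

theorem hasSum_deriv_digamma {x : ℝ} (hx : 0 < x) :
    HasSum (fun n : ℕ => 1 / ((n : ℝ) + x) ^ 2) (deriv digamma x) := by
  rw [(hasDerivAt_digamma hx).deriv]
  exact (summable_one_div_nat_add_sq x).hasSum

theorem hasSum_digamma_sub_digamma {x y : ℝ} (hx : 0 < x) (hy : 0 < y) :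
    HasSum (fun n : ℕ => 1 / ((n : ℝ) + x) - 1 / ((n : ℝ) + y)) (digamma y - digamma x) := by
  have hterm : (fun n : ℕ => 1 / ((n : ℝ) + x) - 1 / ((n : ℝ) + y))
      = fun n : ℕ => (1 / ((n : ℝ) + 1) - 1 / ((n : ℝ) + y))
        - (1 / ((n : ℝ) + 1) - 1 / ((n : ℝ) + x)) := by
    funext n
    ring
  rw [digamma_eq_digammaSeries hx, digamma_eq_digammaSeries hy, digammaSeries, digammaSeries,
    add_sub_add_left_eq_sub, hterm]
  exact (summable_digammaSeries hy).hasSum.sub (summable_digammaSeries hx).hasSum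

theorem hasSum_one_div_nat_add_two_sq :
    HasSum (fun n : ℕ => 1 / ((n : ℝ) + 2) ^ 2) (π ^ 2 / 6 - 1) := by
  have h := (hasSum_nat_add_iff (f := fun n : ℕ => 1 / (n : ℝ) ^ 2) (g := π ^ 2 / 6 - 1) 2).mpr
    (by simpa [Finset.sum_range_succ] using hasSum_zeta_two)
  simpa using h

theorem one_div_nat_add_two_sq_le {x : ℝ} (hx₀ : 0 < x) (hx₁ : x ≤ 1) (n : ℕ) :
    1 / ((n : ℝ) + 2) ^ 2 ≤ 1 / ((n : ℝ) + (x + 1)) ^ 2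
      + 2 * (1 / ((n : ℝ) + x) - 1 / ((n : ℝ) + 2 * x))
      + 2 * x * (2 * (1 / ((n : ℝ) + 2 * x) ^ 2) - 1 / ((n : ℝ) + x) ^ 2) := by
  have hnx : 0 < (n : ℝ) + x := by positivity
  have hn2x : 0 < (n : ℝ) + 2 * x := by positivity
  have hshift : 1 / ((n : ℝ) + 2) ^ 2 ≤ 1 / ((n : ℝ) + (x + 1)) ^ 2 := by
    gcongr
    linarith
  have hrest : 2 * (1 / ((n : ℝ) + x) - 1 / ((n : ℝ) + 2 * x))
      + 2 * x * (2 * (1 / ((n : ℝ) + 2 * x) ^ 2) - 1 / ((n : ℝ) + x) ^ 2)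
      = 2 * x * n * (2 * n + 3 * x) / (((n : ℝ) + x) ^ 2 * ((n : ℝ) + 2 * x) ^ 2) := by
    field_simp
    ring
  have hnonneg :
      0 ≤ 2 * x * n * (2 * n + 3 * x) / (((n : ℝ) + x) ^ 2 * ((n : ℝ) + 2 * x) ^ 2) := by
    positivity
  linarith

theorem neg_g2_deriv_ge (x : ℝ) (hx : x ∈ Set.Ioo (0 : ℝ) 1) :
    Real.pi ^ 2 / 6 - 1 ≤
      deriv digamma (x + 1) + 2 * (digamma (2 * x) - digamma x)
        + 2 * x * (2 * deriv digamma (2 * x) - deriv digamma x) ∧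
    0 < Real.pi ^ 2 / 6 - 1 := by
  obtain ⟨hx₀, hx₁⟩ := hx
  have h2x : 0 < 2 * x := by linarith
  have hsum := ((hasSum_deriv_digamma (by linarith : 0 < x + 1)).add
    ((hasSum_digamma_sub_digamma hx₀ h2x).mul_left 2)).add
    ((((hasSum_deriv_digamma h2x).mul_left 2).sub (hasSum_deriv_digamma hx₀)).mul_left (2 * x))
  exact ⟨hasSum_le (one_div_nat_add_two_sq_le hx₀ hx₁.le) hasSum_one_div_nat_add_two_sq hsum,
    by nlinarith [pi_gt_three]⟩
end
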